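/- arXiv:0901.4913 — 3 statements merged into one kernel-verified Lean document; each statement's English description precedes it below -/
import Mathlib

section
/- Let A be the 2×2 rotation matrix by angle θ acting on a pair of quaternions (u₁, u₂), and suppose A(u₁,u₂)ᵀ = λ(u₁,u₂)ᵀ for a unit quaternion λ, where (u₁,u₂) ≠ (0,0). Then Re λ = cos θ and Im λ (|u₁|² + |u₂|²) = sin θ (u₂ \bar{u}₁ − u₁ \bar{u}₂); in particular, since u₂ \bar{u}₁ − u₁ \bar{u}₂ is purely imaginary, the scalar part of λ is determined to be cos θ. -/
/-!
Multiplying the two eigenvector equations on the right by `ū₁` and `ū₂` and adding gives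
`(|u₁|² + |u₂|²) λ = (|u₁|² + |u₂|²) cos θ + sin θ (u₂ ū₁ - u₁ ū₂)`, because `u ū = |u|²` is real.
Since `u₂ ū₁ - u₁ ū₂ = x - x̄` with `x = u₂ ū₁` is purely imaginary, comparing real and imaginary
parts gives both claims; `|u₁|² + |u₂|² ≠ 0` is what lets us cancel it in the real part.
-/

namespace Quaternion

variable {R : Type*} [CommRing R]

theorem re_mul_star_sub_mul_star (a b : ℍ[R]) : (a * star b - b * star a).re = 0 := by
  rw [re_sub, ← re_star (a * star b), star_mul, star_star, sub_self]

theorem im_mul_star_sub_mul_star (a b : ℍ[R]) :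
    (a * star b - b * star a).im = a * star b - b * star a := by
  conv_rhs => rw [← re_add_im (a * star b - b * star a), re_mul_star_sub_mul_star]
  simp

theorem normSq_add_normSq_smul_of_rotation_eigen {c s : R} {l u₁ u₂ : ℍ[R]}
    (h₁ : c • u₁ + s • u₂ = l * u₁) (h₂ : -s • u₁ + c • u₂ = l * u₂) :
    (normSq u₁ + normSq u₂) • l =
      c • ((normSq u₁ + normSq u₂ : R) : ℍ[R]) + s • (u₂ * star u₁ - u₁ * star u₂) := by
  calc (normSq u₁ + normSq u₂) • l = l * u₁ * star u₁ + l * u₂ * star u₂ := by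
        rw [mul_assoc, mul_assoc, self_mul_star, self_mul_star, ← mul_add, ← coe_add,
          mul_coe_eq_smul]
    _ = _ := by
        rw [← h₁, ← h₂, coe_add, ← self_mul_star, ← self_mul_star]
        simp only [add_mul, smul_mul_assoc]
        module

end Quaternion

open Quaternion in
theorem stmt_8_general (u₁ u₂ l : Quaternion ℝ) (θ : ℝ)
    (hu : ¬(u₁ = 0 ∧ u₂ = 0))
    (h1 : Real.cos θ • u₁ + Real.sin θ • u₂ = l * u₁)
    (h2 : -(Real.sin θ) • u₁ + Real.cos θ • u₂ = l * u₂) :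
    l.re = Real.cos θ ∧
      (‖u₁‖ ^ 2 + ‖u₂‖ ^ 2) • l.im =
        Real.sin θ • (u₂ * star u₁ - u₁ * star u₂) := by
  have hN : ‖u₁‖ ^ 2 + ‖u₂‖ ^ 2 = normSq u₁ + normSq u₂ := by
    simp only [normSq_eq_norm_mul_self, sq]
  have hN₀ : normSq u₁ + normSq u₂ ≠ 0 := by
    rwa [Ne, add_eq_zero_iff_of_nonneg normSq_nonneg normSq_nonneg, normSq_eq_zero,
      normSq_eq_zero]
  have key := normSq_add_normSq_smul_of_rotation_eigen h1 h2
  rw [hN]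
  constructor
  · have hre := congrArg (·.re) key
    simp only [re_smul, re_add, re_coe, re_mul_star_sub_mul_star, smul_eq_mul, mul_zero,
      add_zero] at hre
    exact mul_left_cancel₀ hN₀ (hre.trans (mul_comm _ _))
  · simpa only [im_smul, im_add, im_coe, smul_zero, zero_add, im_mul_star_sub_mul_star]
      using congrArg (·.im) key

theorem stmt_8 (u₁ u₂ l : Quaternion ℝ) (θ : ℝ)
    (hu : ¬(u₁ = 0 ∧ u₂ = 0)) (hl : ‖l‖ = 1)
    (h1 : Real.cos θ • u₁ + Real.sin θ • u₂ = l * u₁)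
    (h2 : -(Real.sin θ) • u₁ + Real.cos θ • u₂ = l * u₂) :
    l.re = Real.cos θ ∧
      (‖u₁‖ ^ 2 + ‖u₂‖ ^ 2) • l.im =
        Real.sin θ • (u₂ * star u₁ - u₁ * star u₂) :=
  stmt_8_general u₁ u₂ l θ hu h1 h2
end

section
/- Let θ ∈ ℝ, ρ ∈ ℂ with |ρ| = 1, and ε ∈ ℂ with |ε|² + |σ|² = 1 for some σ ∈ ℂ. The equation ρ + \bar{ρ} e^{2iθ} − 2 Re(ε) e^{iθ} = 0 holds if and only if \bar{ρ} e^{iθ} = Re ε + i√((Im ε)² + |σ|²) or \bar{ρ} e^{iθ} = Re ε − i√((Im ε)² + |σ|²). -/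
/-!
With `z = conj ρ · e^{iθ}` we have `ρ = conj z · e^{iθ}`, so the left-hand side factors as
`2 e^{iθ} (Re z - Re ε)` and the equation says `Re z = Re ε`. Since `|z| = 1` and
`(Re ε)² + (Im ε)² + |σ|² = 1`, this pins down `Im z` up to sign as `±√((Im ε)² + |σ|²)`.
-/

open Complex ComplexConjugate

lemma Complex.re_eq_iff_eq_add_or_eq_sub_of_norm_eq_one {z : ℂ} (hz : ‖z‖ = 1) {a s : ℝ}
    (has : a ^ 2 + s ^ 2 = 1) :
    z.re = a ↔ z = a + I * s ∨ z = a - I * s := by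
  have hz2 : z.re ^ 2 + z.im ^ 2 = 1 := by
    rw [← normSq_add_mul_I, re_add_im, ← Complex.sq_norm, hz, one_pow]
  simp only [Complex.ext_iff, add_re, sub_re, add_im, sub_im, ofReal_re, ofReal_im,
    mul_re, mul_im, I_re, I_im]
  constructor
  · intro hre
    have him : (z.im - s) * (z.im + s) = 0 := by subst hre; linear_combination hz2 - has
    rcases mul_eq_zero.mp him with h | h
    · exact Or.inl ⟨by simp [hre], by linarith⟩
    · exact Or.inr ⟨by simp [hre], by linarith⟩
  · rintro (⟨h, -⟩ | ⟨h, -⟩) <;> simpa using h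

lemma Complex.add_conj_mul_exp_sub_eq_mul_re_sub (ρ : ℂ) (θ a : ℝ) :
    ρ + conj ρ * exp (2 * θ * I) - 2 * a * exp (θ * I) =
      2 * exp (θ * I) * ((conj ρ * exp (θ * I)).re - a) := by
  have hinv : exp (θ * I) * conj (exp (θ * I)) = 1 := by
    rw [← exp_conj, ← exp_add]; simp
  have hsq : exp (2 * θ * I) = exp (θ * I) ^ 2 := by rw [← exp_nat_mul]; ring_nf
  rw [re_eq_add_conj, map_mul, conj_conj, hsq]
  linear_combination (-ρ) * hinv

theorem stmt_11 (θ : ℝ) (ρ ε σ : ℂ) (hρ : ‖ρ‖ = 1)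
    (hεσ : ‖ε‖ ^ 2 + ‖σ‖ ^ 2 = 1) :
    ρ + (starRingEnd ℂ) ρ * Complex.exp (2 * θ * Complex.I)
        - 2 * (ε.re : ℂ) * Complex.exp (θ * Complex.I) = 0 ↔
      (starRingEnd ℂ) ρ * Complex.exp (θ * Complex.I) =
          (ε.re : ℂ) + Complex.I * Real.sqrt (ε.im ^ 2 + ‖σ‖ ^ 2) ∨
        (starRingEnd ℂ) ρ * Complex.exp (θ * Complex.I) =
          (ε.re : ℂ) - Complex.I * Real.sqrt (ε.im ^ 2 + ‖σ‖ ^ 2) := by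
  have hz : ‖conj ρ * exp (θ * I)‖ = 1 := by
    rw [norm_mul, norm_exp_ofReal_mul_I, RCLike.norm_conj, hρ, one_mul]
  have hs : ε.re ^ 2 + √(ε.im ^ 2 + ‖σ‖ ^ 2) ^ 2 = 1 := by
    rw [Real.sq_sqrt (by positivity), ← hεσ, Complex.sq_norm ε, normSq_apply ε]
    ring
  rw [← re_eq_iff_eq_add_or_eq_sub_of_norm_eq_one hz hs,
    add_conj_mul_exp_sub_eq_mul_re_sub, mul_eq_zero, or_iff_right (by simp [exp_ne_zero]),
    sub_eq_zero, ofReal_inj]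
end

section
/- Let Ω be a 2×3 integer matrix with columns (p_α, q_α), α = 1,2,3, and minors Δ_{αβ} = p_α q_β − p_β q_α. The system of congruences p_α t + q_α s ∈ 2πℤ for α = 1, 2, 3 (t, s ∈ [0, 2π)) has only the trivial solution t = s = 0 if and only if gcd(Δ_{12}, Δ_{13}, Δ_{23}) = ±1. -/
/-!
Put `t = 2πx`, `s = 2πy`; a solution is a point of `[0, 1)²` where every `p_α x + q_α y` is an
integer. By Cramer's rule `Δ_{αβ} x` and `Δ_{αβ} y` are then integers, hence by Bézout so are
`g x` and `g y` for `g` the gcd of the minors, and `g = 1` forces `x = y = 0`. Conversely, if a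
prime `l` divides every minor, `Ω` has rank at most one mod `l`, so some `(a, b) ≢ 0 (mod l)`
satisfies `p_α a + q_α b ≡ 0 (mod l)`, and `x = (a mod l) / l`, `y = (b mod l) / l` is a
nontrivial solution.
-/

open Set Real

namespace AddSubgroup

variable {G : Type*} [AddCommGroup G] {H : AddSubgroup G}

theorem gcd_zsmul_mem {u : G} {d e : ℤ} (hd : d • u ∈ H) (he : e • u ∈ H) :
    (Int.gcd d e : ℤ) • u ∈ H := by
  rw [Int.gcd_eq_gcd_ab, add_smul, mul_comm d, mul_comm e, mul_smul, mul_smul]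
  exact add_mem (zsmul_mem hd _) (zsmul_mem he _)

variable {x y : G} {a b c d : ℤ}

theorem det_zsmul_mem_left (h₁ : a • x + b • y ∈ H) (h₂ : c • x + d • y ∈ H) :
    (a * d - c * b) • x ∈ H := by
  convert sub_mem (zsmul_mem h₁ d) (zsmul_mem h₂ b) using 1
  module

theorem det_zsmul_mem_right (h₁ : a • x + b • y ∈ H) (h₂ : c • x + d • y ∈ H) :
    (a * d - c * b) • y ∈ H := by
  convert sub_mem (zsmul_mem h₂ a) (zsmul_mem h₁ c) using 1
  module

end AddSubgroup

section Minor

variable {R ι : Type*} [CommRing R]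

def minor (p q : ι → R) (α β : ι) : R := p α * q β - p β * q α

theorem exists_not_dvd_and_dvd_of_dvd_minor {l : R} (hl : ¬IsUnit l) {p q : ι → R}
    (h : ∀ α β, l ∣ minor p q α β) :
    ∃ a b : R, ¬(l ∣ a ∧ l ∣ b) ∧ ∀ α, l ∣ p α * a + q α * b := by
  by_cases hpq : ∀ α, l ∣ p α ∧ l ∣ q α
  · exact ⟨1, 0, fun h₁ => hl (isUnit_of_dvd_one h₁.1), fun α => by simpa using (hpq α).1⟩
  · push Not at hpq
    obtain ⟨α, hα⟩ := hpq
    -- the column `(p α, q α)` is nonzero mod `l`, and its rotation is a kernel vector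
    refine ⟨q α, -p α, fun h' => hα (dvd_neg.mp h'.2) h'.1, fun β => ?_⟩
    convert h β α using 1
    simp only [minor]
    ring

theorem dvd_minor_of_dvd_gcd {l : ℤ} {p q : Fin 3 → ℤ}
    (h : l ∣ Int.gcd (Int.gcd (minor p q 0 1) (minor p q 0 2)) (minor p q 1 2)) :
    ∀ α β, l ∣ minor p q α β := by
  have h₀₁ := h.trans ((Int.gcd_dvd_left ..).trans (Int.gcd_dvd_left ..))
  have h₀₂ := h.trans ((Int.gcd_dvd_left ..).trans (Int.gcd_dvd_right ..))
  have h₁₂ := h.trans (Int.gcd_dvd_right ..)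
  simp only [minor] at h₀₁ h₀₂ h₁₂ ⊢
  intro α β
  fin_cases α <;> fin_cases β <;>
    simp [h₀₁, h₀₂, h₁₂, dvd_sub_comm.mp h₀₁, dvd_sub_comm.mp h₀₂, dvd_sub_comm.mp h₁₂]

end Minor

-- The system of the theorem after the substitution `t = 2πx`, `s = 2πy`.
def HasOnlyTrivialSolutionModOne {ι : Type*} (p q : ι → ℤ) : Prop :=
  ∀ x y : ℝ, x ∈ Ico 0 1 → y ∈ Ico 0 1 →
    (∀ α, p α • x + q α • y ∈ (Int.castAddHom ℝ).range) → x = 0 ∧ y = 0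

theorem mul_mem_Ico_zero_iff {K : Type*} [Field K] [LinearOrder K] [IsStrictOrderedRing K]
    {c x : K} (hc : 0 < c) : c * x ∈ Ico 0 c ↔ x ∈ Ico 0 1 := by
  simp only [mem_Ico, mul_nonneg_iff_of_pos_left hc, mul_lt_iff_lt_one_right hc]

theorem forall_two_pi_iff_hasOnlyTrivialSolutionModOne {ι : Type*} (p q : ι → ℤ) :
    (∀ t s : ℝ, t ∈ Ico 0 (2 * π) → s ∈ Ico 0 (2 * π) →
        (∀ α, ∃ k : ℤ, (p α : ℝ) * t + (q α : ℝ) * s = 2 * π * k) → t = 0 ∧ s = 0) ↔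
      HasOnlyTrivialSolutionModOne p q := by
  have hπ : (0 : ℝ) < 2 * π := by positivity
  have hsol : ∀ α x y, (∃ k : ℤ, (p α : ℝ) * (2 * π * x) + q α * (2 * π * y) = 2 * π * k) ↔
      p α • x + q α • y ∈ (Int.castAddHom ℝ).range := fun α x y => by
    simp only [AddMonoidHom.mem_range, Int.coe_castAddHom, zsmul_eq_mul,
      eq_comm (b := (p α : ℝ) * x + _)]
    refine exists_congr fun k => ?_
    rw [mul_left_comm _ (2 * π), mul_left_comm _ (2 * π), ← mul_add, mul_right_inj' hπ.ne']
  rw [(mul_left_surjective₀ hπ.ne').forall₂]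
  simp only [mul_mem_Ico_zero_iff hπ, hsol, mul_eq_zero, hπ.ne', false_or]
  rfl

theorem eq_zero_of_mem_intCast_range_of_mem_Ico {R : Type*} [Ring R] [LinearOrder R]
    [IsStrictOrderedRing R] [FloorRing R] {x : R} (hx : x ∈ (Int.castAddHom R).range)
    (h : x ∈ Ico 0 1) : x = 0 := by
  obtain ⟨k, rfl⟩ := hx
  rw [← Int.fract_eq_self.2 h, Int.coe_castAddHom, Int.fract_intCast]

theorem hasOnlyTrivialSolutionModOne_of_gcd_minor_eq_one {p q : Fin 3 → ℤ}
    (h : Int.gcd (Int.gcd (minor p q 0 1) (minor p q 0 2)) (minor p q 1 2) = 1) :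
    HasOnlyTrivialSolutionModOne p q := by
  intro x y hx hy hsol
  have key : ∀ u ∈ Ico (0 : ℝ) 1,
      (∀ α β, minor p q α β • u ∈ (Int.castAddHom ℝ).range) → u = 0 := by
    intro u hu hmem
    have := AddSubgroup.gcd_zsmul_mem
      (AddSubgroup.gcd_zsmul_mem (hmem 0 1) (hmem 0 2)) (hmem 1 2)
    rw [h, Nat.cast_one, one_smul] at this
    exact eq_zero_of_mem_intCast_range_of_mem_Ico this hu
  exact ⟨key x hx fun α β => AddSubgroup.det_zsmul_mem_left (hsol α) (hsol β),
    key y hy fun α β => AddSubgroup.det_zsmul_mem_right (hsol α) (hsol β)⟩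

theorem not_hasOnlyTrivialSolutionModOne_of_dvd {ι : Type*} {p q : ι → ℤ} {l : ℤ}
    (hl : 0 < l) {a b : ℤ} (hab : ¬(l ∣ a ∧ l ∣ b)) (h : ∀ α, l ∣ p α * a + q α * b) :
    ¬HasOnlyTrivialSolutionModOne p q := by
  intro hT
  have hl' : (0 : ℝ) < l := by exact_mod_cast hl
  have hmem : ∀ n : ℤ, ((n % l : ℤ) : ℝ) / l ∈ Ico (0 : ℝ) 1 := fun n =>
    ⟨div_nonneg (by exact_mod_cast Int.emod_nonneg n hl.ne') hl'.le,
      (div_lt_one hl').2 (by exact_mod_cast Int.emod_lt_of_pos n hl)⟩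
  have hsol : ∀ α, p α • (((a % l : ℤ) : ℝ) / l) + q α • (((b % l : ℤ) : ℝ) / l) ∈
      (Int.castAddHom ℝ).range := fun α => by
    have hmod : p α * (a % l) + q α * (b % l) ≡ p α * a + q α * b [ZMOD l] :=
      ((Int.mod_modEq a l).mul_left _).add ((Int.mod_modEq b l).mul_left _)
    obtain ⟨k, hk⟩ := Int.modEq_zero_iff_dvd.1 (hmod.trans (Int.modEq_zero_iff_dvd.2 (h α)))
    have hk' : (p α : ℝ) * (a % l : ℤ) + q α * (b % l : ℤ) = l * k := by exact_mod_cast hk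
    refine ⟨k, ?_⟩
    simp only [Int.coe_castAddHom, zsmul_eq_mul]
    field_simp
    linarith
  obtain ⟨ha, hb⟩ := hT _ _ (hmem a) (hmem b) hsol
  simp only [div_eq_zero_iff, hl'.ne', or_false, Int.cast_eq_zero] at ha hb
  exact hab ⟨Int.dvd_of_emod_eq_zero ha, Int.dvd_of_emod_eq_zero hb⟩

theorem gcd_minor_eq_one_of_hasOnlyTrivialSolutionModOne {p q : Fin 3 → ℤ}
    (h : HasOnlyTrivialSolutionModOne p q) :
    Int.gcd (Int.gcd (minor p q 0 1) (minor p q 0 2)) (minor p q 1 2) = 1 := by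
  by_contra hg
  obtain ⟨l, hl, hdvd⟩ := Nat.exists_prime_and_dvd hg
  obtain ⟨a, b, hab, hker⟩ := exists_not_dvd_and_dvd_of_dvd_minor
    (Nat.prime_iff_prime_int.mp hl).not_isUnit
    (dvd_minor_of_dvd_gcd (Int.natCast_dvd_natCast.mpr hdvd))
  exact not_hasOnlyTrivialSolutionModOne_of_dvd (by exact_mod_cast hl.pos) hab hker h

theorem stmt_17 (p q : Fin 3 → ℤ) :
    (∀ t s : ℝ, t ∈ Set.Ico 0 (2 * Real.pi) → s ∈ Set.Ico 0 (2 * Real.pi) →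
        (∀ α : Fin 3, ∃ k : ℤ, (p α : ℝ) * t + (q α : ℝ) * s = 2 * Real.pi * k) →
        t = 0 ∧ s = 0) ↔
      Int.gcd (Int.gcd (p 0 * q 1 - p 1 * q 0) (p 0 * q 2 - p 2 * q 0))
          (p 1 * q 2 - p 2 * q 1) = 1 := by
  rw [forall_two_pi_iff_hasOnlyTrivialSolutionModOne]
  exact ⟨gcd_minor_eq_one_of_hasOnlyTrivialSolutionModOne,
    hasOnlyTrivialSolutionModOne_of_gcd_minor_eq_one⟩
end
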